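/- arXiv:2105.05513 — 4 statements merged into one kernel-verified Lean document; each statement's English description precedes it below -/
import Mathlib

section
/- For any n ≥ 0 and d ≥ 1, the number of d-ary rooted plane trees with n internal nodes equals C(dn+1, n)/(dn+1). -/
/-- A `d`-ary tree: a finite prefix-closed set of words over `Fin d` containing
the empty word, where every node has either all `d` children or none. -/
structure DaryTree (d : ℕ) where
  words : Finset (List (Fin d))
  nil_mem : [] ∈ words
  prefix_closed : ∀ u v : List (Fin d), u ∈ words → v <+: u → v ∈ words
  complete : ∀ (u : List (Fin d)) (j : Fin d), u ++ [j] ∈ words → ∀ k : Fin d, u ++ [k] ∈ words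

/-- `u` is a leaf of `T`: a node with no children. -/
def isLeaf {d : ℕ} (T : DaryTree d) (u : List (Fin d)) : Prop :=
  u ∈ T.words ∧ ∀ j : Fin d, u ++ [j] ∉ T.words

/-- `u` is an internal node of `T`: a node with children. -/
def isInternal {d : ℕ} (T : DaryTree d) (u : List (Fin d)) : Prop :=
  u ∈ T.words ∧ ∃ j : Fin d, u ++ [j] ∈ T.words

/-- The number of internal nodes of `T`. -/
noncomputable def internalCount {d : ℕ} (T : DaryTree d) : ℕ :=
  Nat.card {u : List (Fin d) // isInternal T u}

/-- The number of leaves of `T`. -/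
noncomputable def leafCount {d : ℕ} (T : DaryTree d) : ℕ :=
  Nat.card {u : List (Fin d) // isLeaf T u}

/-!
A `d`-ary tree is determined by its set of internal nodes, and the sets that arise are exactly
the finite prefix-closed sets of words over `Fin d`. Removing the root splits a nonempty such set
into `d` prefix-closed sets whose sizes add up to one less. Łukasiewicz words (preorder codes of
trees, `true` for an internal node and `false` for a leaf) split in the same way after their first
letter, so for every `n` both families have the same size. Finally, by the cycle lemma, exactly one
of the `d * n + 1` rotations of a cyclic word of length `d * n + 1` with `n` letters `true` is a
Łukasiewicz word, so `d * n + 1` times the number of Łukasiewicz words is `C(d * n + 1, n)`.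
-/

def IsPrefixClosed {α : Type*} (I : Finset (List α)) : Prop :=
  ∀ u ∈ I, ∀ v, v <+: u → v ∈ I

theorem IsPrefixClosed.nil_mem {α : Type*} {I : Finset (List α)} (hI : IsPrefixClosed I)
    (hne : I.Nonempty) : [] ∈ I :=
  let ⟨u, hu⟩ := hne
  hI u hu [] List.nil_prefix

namespace DaryTree

variable {d : ℕ}

theorem words_injective : Function.Injective (words : DaryTree d → Finset (List (Fin d))) := by
  rintro ⟨⟩ ⟨⟩ h
  cases h
  rfl

def internalNodes (T : DaryTree d) : Finset (List (Fin d)) :=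
  T.words.filter fun u => ∃ j, u ++ [j] ∈ T.words

theorem mem_internalNodes {T : DaryTree d} {u : List (Fin d)} :
    u ∈ T.internalNodes ↔ isInternal T u := by
  simp [internalNodes, isInternal]

theorem internalCount_eq_card (T : DaryTree d) : internalCount T = T.internalNodes.card := by
  simp_rw [internalCount, ← mem_internalNodes]
  exact Nat.card_eq_finsetCard _

theorem isPrefixClosed_internalNodes (T : DaryTree d) : IsPrefixClosed T.internalNodes := by
  rintro u hu v ⟨w, rfl⟩
  obtain ⟨hvw, j, hj⟩ := mem_internalNodes.mp hu
  refine mem_internalNodes.mpr ⟨T.prefix_closed _ v hvw (List.prefix_append v w), ?_⟩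
  cases w with
  | nil => exact ⟨j, by simpa using hj⟩
  | cons x w => exact ⟨x, T.prefix_closed _ _ hvw ⟨w, by simp⟩⟩

def withChildren (I : Finset (List (Fin d))) : Finset (List (Fin d)) :=
  insert [] ((I ×ˢ Finset.univ).image fun p => p.1 ++ [p.2])

theorem mem_withChildren {I : Finset (List (Fin d))} {w : List (Fin d)} :
    w ∈ withChildren I ↔ w = [] ∨ ∃ u ∈ I, ∃ j, w = u ++ [j] := by
  simp only [withChildren, Finset.mem_insert, Finset.mem_image, Finset.mem_product,
    Finset.mem_univ, and_true, Prod.exists]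
  constructor
  · rintro (rfl | ⟨u, j, hu, rfl⟩)
    exacts [Or.inl rfl, Or.inr ⟨u, hu, j, rfl⟩]
  · rintro (rfl | ⟨u, hu, j, rfl⟩)
    exacts [Or.inl rfl, Or.inr ⟨u, j, hu, rfl⟩]

theorem append_singleton_mem_withChildren {I : Finset (List (Fin d))} {u : List (Fin d)}
    {j : Fin d} : u ++ [j] ∈ withChildren I ↔ u ∈ I := by
  simp [withChildren]

theorem mem_withChildren_of_mem {I : Finset (List (Fin d))} (hI : IsPrefixClosed I)
    {w : List (Fin d)} (hw : w ∈ I) : w ∈ withChildren I := by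
  rcases eq_or_ne w [] with rfl | hne
  · exact mem_withChildren.mpr (Or.inl rfl)
  · rw [← List.dropLast_append_getLast hne, append_singleton_mem_withChildren]
    exact hI w hw _ (List.dropLast_prefix w)

def ofInternalNodes (I : Finset (List (Fin d))) (hI : IsPrefixClosed I) : DaryTree d where
  words := withChildren I
  nil_mem := Finset.mem_insert_self _ _
  prefix_closed w v hw hv := by
    obtain rfl | ⟨u, hu, j, rfl⟩ := mem_withChildren.mp hw
    · rw [List.prefix_nil.mp hv]
      exact Finset.mem_insert_self _ _
    · obtain rfl | hvu := List.prefix_concat_iff.mp hv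
      · exact append_singleton_mem_withChildren.mpr hu
      · exact mem_withChildren_of_mem hI (hI u hu v hvu)
  complete u j hj k := append_singleton_mem_withChildren.mpr
    (append_singleton_mem_withChildren.mp hj)

theorem isInternal_ofInternalNodes (hd : 0 < d) {I : Finset (List (Fin d))}
    (hI : IsPrefixClosed I) {u : List (Fin d)} : isInternal (ofInternalNodes I hI) u ↔ u ∈ I :=
  ⟨fun ⟨_, _, hj⟩ => append_singleton_mem_withChildren.mp hj,
    fun hu => ⟨mem_withChildren_of_mem hI hu, ⟨0, hd⟩,
      append_singleton_mem_withChildren.mpr hu⟩⟩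

theorem internalNodes_ofInternalNodes (hd : 0 < d) {I : Finset (List (Fin d))}
    (hI : IsPrefixClosed I) : (ofInternalNodes I hI).internalNodes = I := by
  ext u
  rw [mem_internalNodes, isInternal_ofInternalNodes hd]

theorem ofInternalNodes_internalNodes (T : DaryTree d) :
    ofInternalNodes T.internalNodes T.isPrefixClosed_internalNodes = T := by
  refine words_injective (Finset.ext fun w => ?_)
  change w ∈ withChildren _ ↔ _
  constructor
  · intro hw
    obtain rfl | ⟨u, hu, j, rfl⟩ := mem_withChildren.mp hw
    · exact T.nil_mem
    · obtain ⟨-, k, hk⟩ := mem_internalNodes.mp hu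
      exact T.complete u k hk j
  · intro hw
    rcases eq_or_ne w [] with rfl | hne
    · exact Finset.mem_insert_self _ _
    · rw [← List.dropLast_append_getLast hne] at hw ⊢
      refine append_singleton_mem_withChildren.mpr (mem_internalNodes.mpr ⟨?_, _, hw⟩)
      exact T.prefix_closed _ _ hw (List.prefix_append _ _)

def equivPrefixClosed (hd : 0 < d) (n : ℕ) :
    {T : DaryTree d // internalCount T = n} ≃
      {I : {I : Finset (List (Fin d)) // IsPrefixClosed I} // I.1.card = n} where
  toFun T := ⟨⟨T.1.internalNodes, T.1.isPrefixClosed_internalNodes⟩,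
    T.1.internalCount_eq_card ▸ T.2⟩
  invFun I := ⟨ofInternalNodes I.1.1 I.1.2, by
    rw [internalCount_eq_card, internalNodes_ofInternalNodes hd, I.2]⟩
  left_inv T := Subtype.ext (ofInternalNodes_internalNodes T.1)
  right_inv I := Subtype.ext (Subtype.ext (internalNodes_ofInternalNodes hd I.1.2))

end DaryTree

section RootDecomposition

variable {α : Type*}

noncomputable def branch (a : α) (I : Finset (List α)) : Finset (List α) :=
  I.preimage (List.cons a) List.cons_injective.injOn

theorem mem_branch {a : α} {I : Finset (List α)} {v : List α} :
    v ∈ branch a I ↔ a :: v ∈ I :=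
  Finset.mem_preimage

theorem isPrefixClosed_branch {I : Finset (List α)} (hI : IsPrefixClosed I) (a : α) :
    IsPrefixClosed (branch a I) := fun _ hu _ hv =>
  mem_branch.mpr (hI _ (mem_branch.mp hu) _ (List.cons_prefix_cons.mpr ⟨rfl, hv⟩))

instance : Unique {I : {I : Finset (List α) // IsPrefixClosed I} // I.1.card = 0} where
  default := ⟨⟨∅, fun _ h => absurd h (Finset.notMem_empty _)⟩, rfl⟩
  uniq I := Subtype.ext (Subtype.ext (Finset.card_eq_zero.mp I.2))

variable [Fintype α] [DecidableEq α]

/-- The set of words of the tree with root-subtrees `f a`, `a : α`. -/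
def graft (f : α → Finset (List α)) : Finset (List α) :=
  insert [] (Finset.univ.biUnion fun a => (f a).map ⟨List.cons a, List.cons_injective⟩)

theorem nil_mem_graft (f : α → Finset (List α)) : [] ∈ graft f :=
  Finset.mem_insert_self _ _

theorem cons_mem_graft {f : α → Finset (List α)} {a : α} {v : List α} :
    a :: v ∈ graft f ↔ v ∈ f a := by
  simp [graft]

theorem isPrefixClosed_graft {f : α → Finset (List α)} (hf : ∀ a, IsPrefixClosed (f a)) :
    IsPrefixClosed (graft f) := by
  intro u hu v hv
  cases u with
  | nil => rw [List.prefix_nil.mp hv]; exact nil_mem_graft f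
  | cons a u =>
    cases v with
    | nil => exact nil_mem_graft f
    | cons b v =>
      obtain ⟨rfl, hvu⟩ := List.cons_prefix_cons.mp hv
      exact cons_mem_graft.mpr (hf b u (cons_mem_graft.mp hu) v hvu)

theorem card_graft (f : α → Finset (List α)) : (graft f).card = ∑ a, (f a).card + 1 := by
  rw [graft, Finset.card_insert_of_notMem (by simp), Finset.card_biUnion]
  · simp
  · intro a _ b _ hab
    simp only [Finset.disjoint_left, Finset.mem_map, Function.Embedding.coeFn_mk]
    rintro _ ⟨_, -, rfl⟩ ⟨_, -, h⟩
    exact hab (List.cons_eq_cons.mp h).1.symm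

theorem branch_graft (f : α → Finset (List α)) (a : α) : branch a (graft f) = f a := by
  ext v
  rw [mem_branch, cons_mem_graft]

theorem graft_branch {I : Finset (List α)} (hnil : [] ∈ I) :
    graft (fun a => branch a I) = I := by
  ext w
  cases w with
  | nil => simp only [nil_mem_graft, hnil]
  | cons a v => rw [cons_mem_graft, mem_branch]

noncomputable def prefixClosedSuccEquiv (n : ℕ) :
    {I : {I : Finset (List α) // IsPrefixClosed I} // I.1.card = n + 1} ≃
      {f : α → {I : Finset (List α) // IsPrefixClosed I} // ∑ a, (f a).1.card = n} where
  toFun I := ⟨fun a => ⟨branch a I.1.1, isPrefixClosed_branch I.1.2 a⟩, by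
    have hnil := I.1.2.nil_mem (Finset.card_pos.mp (by omega))
    have := card_graft fun a => branch a I.1.1
    rw [graft_branch hnil, I.2] at this
    change ∑ a, (branch a I.1.1).card = n
    omega⟩
  invFun f := ⟨⟨graft fun a => (f.1 a).1, isPrefixClosed_graft fun a => (f.1 a).2⟩, by
    rw [card_graft, f.2]⟩
  left_inv I := Subtype.ext (Subtype.ext
    (graft_branch (I.1.2.nil_mem (Finset.card_pos.mp (by omega)))))
  right_inv f := Subtype.ext (funext fun a => Subtype.ext (branch_graft _ a))

end RootDecomposition

section WeightedTuples

variable {ι α β : Type*} [Fintype ι]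

def tupleEquivSigma (w : α → ℕ) (n : ℕ) :
    {f : ι → α // ∑ i, w (f i) = n} ≃
      Σ v : {v : ι → ℕ // ∑ i, v i = n}, ∀ i, {a : α // w a = v.1 i} :=
  (Equiv.sigmaFiberEquiv fun f : {f : ι → α // ∑ i, w (f i) = n} =>
      (⟨fun i => w (f.1 i), f.2⟩ : {v : ι → ℕ // ∑ i, v i = n})).symm.trans <|
    Equiv.sigmaCongrRight fun v =>
      { toFun F i := ⟨F.1.1 i, congrFun (congrArg Subtype.val F.2) i⟩
        invFun g := ⟨⟨fun i => (g i).1, by simp only [(g _).2, v.2]⟩,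
          Subtype.ext (funext fun i => (g i).2)⟩
        left_inv _ := rfl
        right_inv _ := rfl }

/-- Tuples of total weight `n` only see the elements of weight at most `n`. -/
def tupleEquivOfFiberEquiv {wα : α → ℕ} {wβ : β → ℕ} {n : ℕ}
    (e : ∀ m ≤ n, {a : α // wα a = m} ≃ {b : β // wβ b = m}) :
    {f : ι → α // ∑ i, wα (f i) = n} ≃ {f : ι → β // ∑ i, wβ (f i) = n} :=
  (tupleEquivSigma wα n).trans <|
    (Equiv.sigmaCongrRight fun v : {v : ι → ℕ // ∑ i, v i = n} => Equiv.piCongrRight fun i =>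
      e (v.1 i) (v.2 ▸ Finset.single_le_sum (fun j _ => Nat.zero_le (v.1 j))
        (Finset.mem_univ i) :)).trans (tupleEquivSigma wβ n).symm

end WeightedTuples

theorem List.count_take_add {α : Type*} [BEq α] (l : List α) (a : α) (m m' : ℕ) :
    (l.take (m + m')).count a = (l.take m).count a + ((l.drop m).take m').count a := by
  rw [List.take_add, List.count_append]

theorem List.count_flatten_ofFn {α : Type*} [BEq α] {k : ℕ} (f : Fin k → List α) (a : α) :
    (List.ofFn f).flatten.count a = ∑ i, (f i).count a := by
  rw [List.count_flatten, List.map_ofFn, List.sum_ofFn]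
  rfl

/-- `l` is the preorder code (`true` for an internal node, `false` for a leaf) of a sequence of
`k` `d`-ary trees: no proper prefix has completed all `k` trees. -/
def IsLukasiewicz (d k : ℕ) (l : List Bool) : Prop :=
  l.length = d * l.count true + k ∧ ∀ m < l.length, m < d * (l.take m).count true + k

namespace IsLukasiewicz

variable {d k : ℕ}

theorem zero_iff {l : List Bool} : IsLukasiewicz d 0 l ↔ l = [] := by
  refine ⟨fun ⟨_, h⟩ => ?_, fun h => by simp [h, IsLukasiewicz]⟩
  by_contra hne
  simpa using h 0 (List.length_pos_iff.mpr hne)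

theorem append {b r : List Bool} (hb : IsLukasiewicz d 1 b) (hr : IsLukasiewicz d k r) :
    IsLukasiewicz d (k + 1) (b ++ r) := by
  obtain ⟨hblen, hbpre⟩ := hb
  obtain ⟨hrlen, hrpre⟩ := hr
  refine ⟨by rw [List.length_append, List.count_append, Nat.mul_add]; omega, fun m hm => ?_⟩
  rw [List.length_append] at hm
  rcases lt_or_ge m b.length with h | h
  · rw [List.take_append_of_le_length h.le]
    have := hbpre m h
    omega
  · obtain ⟨m', rfl⟩ := Nat.exists_eq_add_of_le h
    rw [List.take_append, List.take_of_length_le (by omega), List.count_append, Nat.mul_add,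
      Nat.add_sub_cancel_left]
    have := hrpre m' (by omega)
    omega

theorem exists_append {l : List Bool} (hl : IsLukasiewicz d (k + 1) l) :
    ∃ b r, IsLukasiewicz d 1 b ∧ IsLukasiewicz d k r ∧ l = b ++ r := by
  classical
  obtain ⟨hlen, hpre⟩ := hl
  have hex : ∃ m, d * (l.take m).count true + 1 ≤ m :=
    ⟨l.length, by rw [List.take_length]; omega⟩
  obtain ⟨m₀, hm₀, hmin⟩ : ∃ m₀, d * (l.take m₀).count true + 1 ≤ m₀ ∧
      ∀ m < m₀, m < d * (l.take m).count true + 1 :=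
    ⟨Nat.find hex, Nat.find_spec hex, fun m hm => not_le.mp (Nat.find_min hex hm)⟩
  have hm₀len : m₀ ≤ l.length := by
    by_contra! h
    have := hmin l.length h
    rw [List.take_length] at this
    omega
  -- the walk `m - d * #true` rises by at most one per letter, so it equals `1` when it first
  -- reaches `1`
  have heq : m₀ = d * (l.take m₀).count true + 1 := by
    have hprev := hmin (m₀ - 1) (by omega)
    have hmono := List.count_take_add l true (m₀ - 1) 1
    rw [Nat.sub_add_cancel (by omega)] at hmono
    have : d * (l.take (m₀ - 1)).count true ≤ d * (l.take m₀).count true :=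
      Nat.mul_le_mul_left d (by omega)
    omega
  have hcount : l.count true = (l.take m₀).count true + (l.drop m₀).count true := by
    rw [← List.count_append, List.take_append_drop]
  refine ⟨l.take m₀, l.drop m₀, ⟨?_, fun m hm => ?_⟩, ⟨?_, fun m hm => ?_⟩,
    (List.take_append_drop m₀ l).symm⟩
  · rwa [List.length_take_of_le hm₀len]
  · rw [List.length_take_of_le hm₀len] at hm
    rw [List.take_take, min_eq_left hm.le]
    exact hmin m hm
  · rw [List.length_drop]
    rw [hcount, Nat.mul_add] at hlen
    omega
  · rw [List.length_drop] at hm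
    have := hpre (m₀ + m) (by omega)
    rw [List.count_take_add, Nat.mul_add] at this
    omega

theorem eq_of_append_eq {b b' r r' : List Bool} (hb : IsLukasiewicz d 1 b)
    (hb' : IsLukasiewicz d 1 b') (h : b ++ r = b' ++ r') : b = b' := by
  wlog hle : b.length ≤ b'.length generalizing b b' r r'
  · exact (this hb' hb h.symm (by omega)).symm
  have hpre : b'.take b.length = b := by
    rw [← List.take_append_of_le_length hle, ← h, List.take_left]
  rcases hle.lt_or_eq with hlt | heq
  · have := hb'.2 b.length hlt
    rw [hpre] at this
    have := hb.1
    omega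
  · rw [← hpre, heq, List.take_length]

theorem flatten_ofFn {f : Fin k → List Bool} (hf : ∀ i, IsLukasiewicz d 1 (f i)) :
    IsLukasiewicz d k (List.ofFn f).flatten := by
  induction k with
  | zero => simp [zero_iff]
  | succ k ih =>
    rw [List.ofFn_succ, List.flatten_cons]
    exact (hf 0).append (ih fun i => hf i.succ)

theorem exists_eq_flatten_ofFn {l : List Bool} (hl : IsLukasiewicz d k l) :
    ∃ f : Fin k → List Bool,
      (∀ i, IsLukasiewicz d 1 (f i)) ∧ l = (List.ofFn f).flatten := by
  induction k generalizing l with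
  | zero => exact ⟨Fin.elim0, fun i => i.elim0, by simpa using zero_iff.mp hl⟩
  | succ k ih =>
    obtain ⟨b, r, hb, hr, rfl⟩ := hl.exists_append
    obtain ⟨f, hf, rfl⟩ := ih hr
    refine ⟨Fin.cons b f, Fin.cases hb hf, ?_⟩
    simp [List.ofFn_succ]

theorem flatten_ofFn_injective {f g : Fin k → List Bool} (hf : ∀ i, IsLukasiewicz d 1 (f i))
    (hg : ∀ i, IsLukasiewicz d 1 (g i))
    (h : (List.ofFn f).flatten = (List.ofFn g).flatten) : f = g := by
  induction k with
  | zero => exact funext fun i => i.elim0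
  | succ k ih =>
    rw [List.ofFn_succ, List.ofFn_succ, List.flatten_cons, List.flatten_cons] at h
    have h0 := eq_of_append_eq (hf 0) (hg 0) h
    rw [h0, List.append_cancel_left_eq] at h
    have htail := ih (fun i => hf i.succ) (fun i => hg i.succ) h
    exact funext (Fin.cases h0 (congrFun htail))

theorem cons_true_iff {r : List Bool} : IsLukasiewicz d 1 (true :: r) ↔ IsLukasiewicz d d r := by
  simp only [IsLukasiewicz, List.length_cons, List.count_cons_self]
  refine ⟨fun ⟨hlen, hpre⟩ => ⟨by rw [Nat.mul_add] at hlen; omega, fun m hm => ?_⟩,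
    fun ⟨hlen, hpre⟩ => ⟨by rw [Nat.mul_add]; omega, fun m hm => ?_⟩⟩
  · have := hpre (m + 1) (by omega)
    rw [List.take_succ_cons, List.count_cons_self, Nat.mul_add] at this
    omega
  · cases m with
    | zero => omega
    | succ m =>
      have := hpre m (by omega)
      rw [List.take_succ_cons, List.count_cons_self, Nat.mul_add]
      omega

theorem exists_eq_cons_true {l : List Bool} (hl : IsLukasiewicz d 1 l)
    (hc : 0 < l.count true) : ∃ r, l = true :: r := by
  obtain _ | ⟨x, r⟩ := l
  · simp at hc
  cases x
  · obtain _ | ⟨y, r⟩ := r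
    · simp at hc
    · simpa using hl.2 1 (by simp)
  · exact ⟨r, rfl⟩

end IsLukasiewicz

/-- A Łukasiewicz word with `n + 1` internal nodes is `true` followed by `d` Łukasiewicz words. -/
noncomputable def lukasiewiczSuccEquiv (d n : ℕ) :
    {l : {l : List Bool // IsLukasiewicz d 1 l} // l.1.count true = n + 1} ≃
      {f : Fin d → {l : List Bool // IsLukasiewicz d 1 l} // ∑ i, (f i).1.count true = n} := by
  refine (Equiv.ofBijective (fun f => ⟨⟨true :: (List.ofFn fun i => (f.1 i).1).flatten,
      IsLukasiewicz.cons_true_iff.mpr (.flatten_ofFn fun i => (f.1 i).2)⟩,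
      by simp [List.count_flatten_ofFn, f.2]⟩)
    ⟨fun f g h => ?_, fun l => ?_⟩).symm
  · simp only [Subtype.mk.injEq, List.cons.injEq, true_and] at h
    have := IsLukasiewicz.flatten_ofFn_injective (fun i => (f.1 i).2) (fun i => (g.1 i).2) h
    exact Subtype.ext (funext fun i => Subtype.ext (congrFun this i))
  · obtain ⟨⟨l, hl⟩, hc⟩ := l
    obtain ⟨r, rfl⟩ := hl.exists_eq_cons_true (by rw [hc]; omega)
    obtain ⟨f, hf, rfl⟩ := (IsLukasiewicz.cons_true_iff.mp hl).exists_eq_flatten_ofFn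
    refine ⟨⟨fun i => ⟨f i, hf i⟩, ?_⟩, rfl⟩
    simpa [List.count_flatten_ofFn] using hc

instance (d : ℕ) : Unique {l : {l : List Bool // IsLukasiewicz d 1 l} // l.1.count true = 0} where
  default := ⟨⟨[false], by simp, fun m hm => by simp_all⟩, rfl⟩
  uniq := by
    rintro ⟨⟨l, hlen, -⟩, hc⟩
    rw [hc] at hlen
    obtain ⟨x, rfl⟩ := List.length_eq_one_iff.mp hlen
    cases x
    · rfl
    · simp at hc

theorem nonempty_prefixClosed_equiv_lukasiewicz (d n : ℕ) :
    Nonempty ({I : {I : Finset (List (Fin d)) // IsPrefixClosed I} // I.1.card = n} ≃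
      {l : {l : List Bool // IsLukasiewicz d 1 l} // l.1.count true = n}) := by
  induction n using Nat.strong_induction_on with
  | _ n ih =>
    cases n with
    | zero => exact ⟨Equiv.ofUnique _ _⟩
    | succ n =>
      exact ⟨(prefixClosedSuccEquiv n).trans <| (tupleEquivOfFiberEquiv fun m hm =>
        (ih m (by omega)).some).trans (lukasiewiczSuccEquiv d n).symm⟩

/-- The cycle lemma for a walk whose increments over `N` steps always sum to `-1`. -/
theorem existsUnique_forall_le_add_of_add_period {N : ℕ} (hN : 0 < N) (D : ℕ → ℤ)
    (hD : ∀ k, D (k + N) = D k - 1) : ∃! k, k < N ∧ ∀ m < N, D k ≤ D (k + m) := by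
  classical
  have hex : ∃ k, k < N ∧ ∀ j < N, D k ≤ D j := by
    obtain ⟨k, hk, hmin⟩ := Finset.exists_min_image (Finset.range N) D ⟨0, by simpa⟩
    exact ⟨k, by simpa using hk, fun j hj => hmin j (by simpa using hj)⟩
  -- the first minimum of `D` on `[0, N)`
  obtain ⟨k₀, ⟨hk₀N, hk₀min⟩, hfirst⟩ :
      ∃ k₀, (k₀ < N ∧ ∀ j < N, D k₀ ≤ D j) ∧ ∀ j < k₀, D k₀ < D j := by
    refine ⟨Nat.find hex, Nat.find_spec hex, fun j hj => ?_⟩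
    have := Nat.find_min hex hj
    simp only [not_and, not_forall, not_le] at this
    obtain ⟨j', hj', hlt⟩ := this (hj.trans (Nat.find_spec hex).1)
    exact ((Nat.find_spec hex).2 j' hj').trans_lt hlt
  refine ⟨k₀, ⟨hk₀N, fun m hm => ?_⟩, fun k ⟨hkN, hk⟩ => ?_⟩
  · rcases lt_or_ge (k₀ + m) N with h | h
    · exact hk₀min _ h
    · have := hfirst (k₀ + m - N) (by omega)
      rw [show k₀ + m = k₀ + m - N + N by omega, hD]
      omega
  · rcases lt_trichotomy k k₀ with h | h | h
    · have := hk (k₀ - k) (by omega)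
      rw [Nat.add_sub_cancel' h.le] at this
      exact absurd (hfirst k h) this.not_gt
    · exact h
    · have := hk (k₀ + N - k) (by omega)
      rw [Nat.add_sub_cancel' (by omega), hD] at this
      have := hk₀min k hkN
      omega

section CyclicWords

variable {N : ℕ}

theorem ZMod.sum_range_natCast_add [NeZero N] {M : Type*} [AddCommMonoid M] (f : ZMod N → M)
    (k : ℕ) :
    ∑ j ∈ Finset.range N, f ((k + j : ℕ) : ZMod N) = ∑ z, f z := by
  refine Finset.sum_nbij' (fun j => ((k + j : ℕ) : ZMod N)) (fun z => (z - k).val)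
    (fun _ _ => Finset.mem_univ _) (fun z _ => Finset.mem_range.mpr (ZMod.val_lt _))
    (fun j hj => ?_) (fun z _ => ?_) (fun _ _ => rfl)
  · rw [Nat.cast_add, add_sub_cancel_left, ZMod.val_cast_of_lt (Finset.mem_range.mp hj)]
  · simp

def windowCount (s : Finset (ZMod N)) (k m : ℕ) : ℕ :=
  ∑ j ∈ Finset.range m, if ((k + j : ℕ) : ZMod N) ∈ s then 1 else 0

theorem windowCount_add (s : Finset (ZMod N)) (k m m' : ℕ) :
    windowCount s k (m + m') = windowCount s k m + windowCount s (k + m) m' := by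
  simp only [windowCount, Finset.sum_range_add, add_assoc]

/-- The cyclic word with `true` exactly at the positions in `s`, read from position `g`. -/
def readFrom (s : Finset (ZMod N)) (g : ZMod N) : List Bool :=
  (List.range N).map fun j : ℕ => decide (g + j ∈ s)

theorem length_readFrom (s : Finset (ZMod N)) (g : ZMod N) : (readFrom s g).length = N := by
  simp [readFrom]

variable [NeZero N]

theorem windowCount_period (s : Finset (ZMod N)) (k : ℕ) :
    windowCount s k N = s.card := by
  rw [windowCount, ZMod.sum_range_natCast_add fun z => if z ∈ s then 1 else 0,
    Finset.sum_boole, Finset.filter_mem_eq_inter, Finset.univ_inter, Nat.cast_id]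

theorem count_take_readFrom (s : Finset (ZMod N)) (g : ZMod N) {m : ℕ} (hm : m ≤ N) :
    ((readFrom s g).take m).count true = windowCount s g.val m := by
  rw [readFrom, ← List.map_take, List.take_range, min_eq_left hm]
  induction m with
  | zero => rfl
  | succ m ih =>
    rw [List.range_succ, List.map_append, List.count_append, ih (by omega)]
    rw [windowCount, windowCount, Finset.sum_range_succ]
    by_cases h : g + m ∈ s <;> simp [h]

theorem count_readFrom (s : Finset (ZMod N)) (g : ZMod N) :
    (readFrom s g).count true = s.card := by
  rw [← windowCount_period s g.val, ← count_take_readFrom s g le_rfl,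
    List.take_of_length_le (length_readFrom s g).le]

theorem isLukasiewicz_readFrom_iff {d : ℕ} {s : Finset (ZMod N)} (hN : N = d * s.card + 1)
    (g : ZMod N) :
    IsLukasiewicz d 1 (readFrom s g) ↔ ∀ m < N, m < d * windowCount s g.val m + 1 := by
  simp only [IsLukasiewicz, length_readFrom, count_readFrom, hN, true_and]
  exact forall₂_congr fun m hm => by rw [count_take_readFrom s g (by omega)]

theorem existsUnique_isLukasiewicz_readFrom {d : ℕ} {s : Finset (ZMod N)}
    (hN : N = d * s.card + 1) : ∃! g, IsLukasiewicz d 1 (readFrom s g) := by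
  let D (k : ℕ) : ℤ := d * windowCount s 0 k - k
  have hstep (k m : ℕ) : m < d * windowCount s k m + 1 ↔ D k ≤ D (k + m) := by
    zify
    simp only [D, windowCount_add s 0 k m, zero_add]
    push_cast
    constructor <;> intro h <;> linarith
  have hD (k : ℕ) : D (k + N) = D k - 1 := by
    have hN' : (N : ℤ) = d * s.card + 1 := by exact_mod_cast hN
    simp only [D, windowCount_add, windowCount_period]
    push_cast
    rw [hN']
    ring
  obtain ⟨k, ⟨hkN, hk⟩, huniq⟩ :=
    existsUnique_forall_le_add_of_add_period (Nat.pos_of_neZero N) D hD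
  refine ⟨k, ?_, fun g (hg : IsLukasiewicz d 1 (readFrom s g)) => ?_⟩
  · show IsLukasiewicz d 1 (readFrom s (k : ZMod N))
    rw [isLukasiewicz_readFrom_iff hN, ZMod.val_cast_of_lt hkN]
    exact fun m hm => (hstep k m).mpr (hk m hm)
  · rw [isLukasiewicz_readFrom_iff hN] at hg
    rw [← huniq g.val ⟨ZMod.val_lt g, fun m hm => (hstep _ m).mp (hg m hm)⟩,
      ZMod.natCast_zmod_val]

/-- The positions of `true` in `l`, placed around the cycle starting from `g`. -/
def marksFrom (l : List Bool) (g : ZMod N) : Finset (ZMod N) :=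
  Finset.univ.filter fun z => l.getD (z - g).val false

theorem readFrom_marksFrom {l : List Bool} (hl : l.length = N) (g : ZMod N) :
    readFrom (marksFrom l g) g = l := by
  refine List.ext_getElem (by rw [length_readFrom, hl]) fun i hi _ => ?_
  rw [length_readFrom] at hi
  simp [readFrom, marksFrom, Nat.mod_eq_of_lt hi, List.getElem?_eq_getElem (hl ▸ hi)]

theorem marksFrom_readFrom (s : Finset (ZMod N)) (g : ZMod N) : marksFrom (readFrom s g) g = s := by
  ext z
  have := ZMod.val_lt (z - g)
  simp [readFrom, marksFrom, List.getD_eq_getElem?_getD, this]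

theorem card_marksFrom {l : List Bool} (hl : l.length = N) (g : ZMod N) :
    (marksFrom l g).card = l.count true := by
  rw [← count_readFrom, readFrom_marksFrom hl]

end CyclicWords

noncomputable def lukasiewiczProdEquiv (d n : ℕ) :
    {l : {l : List Bool // IsLukasiewicz d 1 l} // l.1.count true = n} × ZMod (d * n + 1) ≃
      {s : Finset (ZMod (d * n + 1)) // s.card = n} := by
  have hlen (l : {l : {l : List Bool // IsLukasiewicz d 1 l} // l.1.count true = n}) :
      l.1.1.length = d * n + 1 := by rw [l.1.2.1, l.2]
  refine Equiv.ofBijective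
    (fun p => ⟨marksFrom p.1.1.1 p.2, by rw [card_marksFrom (hlen p.1), p.1.2]⟩)
    ⟨fun p q h => ?_, fun s => ?_⟩
  · obtain ⟨l, g⟩ := p
    obtain ⟨l', g'⟩ := q
    have h : marksFrom l.1.1 g = marksFrom l'.1.1 g' := congrArg Subtype.val h
    have hN : d * n + 1 = d * (marksFrom l.1.1 g).card + 1 := by
      rw [card_marksFrom (hlen l), l.2]
    have hg : g = g' := (existsUnique_isLukasiewicz_readFrom hN).unique
      (by rw [readFrom_marksFrom (hlen l)]; exact l.1.2)
      (by rw [h, readFrom_marksFrom (hlen l')]; exact l'.1.2)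
    subst hg
    have hl : l.1.1 = l'.1.1 := by
      rw [← readFrom_marksFrom (hlen l) g, h, readFrom_marksFrom (hlen l')]
    rw [Subtype.ext (Subtype.ext hl)]
  · obtain ⟨g, hg, -⟩ := existsUnique_isLukasiewicz_readFrom (d := d) (s := s.1) (by rw [s.2])
    exact ⟨⟨⟨⟨readFrom s.1 g, hg⟩, by rw [count_readFrom, s.2]⟩, g⟩,
      Subtype.ext (marksFrom_readFrom s.1 g)⟩

theorem card_lukasiewicz_mul (d n : ℕ) :
    Nat.card {l : {l : List Bool // IsLukasiewicz d 1 l} // l.1.count true = n} * (d * n + 1) =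
      (d * n + 1).choose n := by
  have := Nat.card_congr (lukasiewiczProdEquiv d n)
  rwa [Nat.card_prod, Nat.card_zmod, Nat.card_eq_fintype_card (α := {s : Finset _ // _}),
    Fintype.card_finset_len, ZMod.card] at this

/-- The number of `d`-ary rooted plane trees with `n` internal nodes is
`C(dn+1, n) / (dn+1)`. -/
theorem statement0 (n d : ℕ) (hd : 1 ≤ d) :
    Nat.card {T : DaryTree d // internalCount T = n} =
      (d * n + 1).choose n / (d * n + 1) := by
  obtain ⟨e⟩ := nonempty_prefixClosed_equiv_lukasiewicz d n
  rw [Nat.card_congr ((DaryTree.equivPrefixClosed hd n).trans e), ← card_lukasiewicz_mul,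
    Nat.mul_div_cancel _ (Nat.succ_pos _)]
end

section
/- For all n ≥ 0 and d ≥ 2, with a(n,d) = C(dn+1,n)/(dn+1), the identity C((d-1)(n+1)+1, d-1) · a(n+1,d) = d · C(dn+d-1, d-1) · a(n,d) holds. -/
/-!
Writing `d = e + 1`, the Fuss–Catalan number has the factorial form
`a(n, d) · n! · (en + 1)! = (dn)!`. Multiplying both sides of the identity by
`e! · (en + 1)! · (n + 1)! · (en + e + 1)!` and expanding the binomials into factorials, the left
side becomes `(en + e + 1)! · (d(n + 1))!` and the right side `d(n + 1) · (dn + e)! · (en + e + 1)!`;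
these agree because `d(n + 1) = (dn + e) + 1`.
-/

open Nat

/-- `a n d = C(dn+1, n) / (dn+1)`, the number of `d`-ary trees with `n` internal nodes. -/
def a (n d : ℕ) : ℕ := (d * n + 1).choose n / (d * n + 1)

lemma mul_add_one_dvd_choose (d n : ℕ) : d * n + 1 ∣ (d * n + 1).choose n := by
  cases n with
  | zero => simp
  | succ k =>
    have hcop : Coprime (d * (k + 1) + 1) (k + 1) := by simp
    have hdvd : d * (k + 1) + 1 ∣ (d * (k + 1) + 1).choose (k + 1) * (k + 1) := by
      rw [← add_one_mul_choose_eq]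
      exact dvd_mul_right _ _
    exact hcop.dvd_of_dvd_mul_right hdvd

lemma mul_add_one_mul_a (d n : ℕ) : (d * n + 1) * a n d = (d * n + 1).choose n :=
  Nat.mul_div_cancel' (mul_add_one_dvd_choose d n)

lemma a_mul_factorial_mul_factorial (e n : ℕ) :
    a n (e + 1) * (n ! * (e * n + 1)!) = ((e + 1) * n)! := by
  have hsplit : (e + 1) * n + 1 = e * n + 1 + n := by ring
  apply Nat.eq_of_mul_eq_mul_left (succ_pos ((e + 1) * n))
  calc ((e + 1) * n + 1) * (a n (e + 1) * (n ! * (e * n + 1)!))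
      = ((e + 1) * n + 1).choose n * (e * n + 1)! * n ! := by
        rw [← mul_add_one_mul_a]; ring
    _ = ((e + 1) * n + 1)! := by
        rw [hsplit, add_choose_mul_factorial_mul_factorial]
    _ = ((e + 1) * n + 1) * ((e + 1) * n)! := factorial_succ _

/-- The identity `C((d-1)(n+1)+1, d-1) · a(n+1,d) = d · C(dn+d-1, d-1) · a(n,d)`. -/
theorem statement4 (n d : ℕ) (hd : 2 ≤ d) :
    ((d - 1) * (n + 1) + 1).choose (d - 1) * a (n + 1) d =
      d * (d * n + d - 1).choose (d - 1) * a n d := by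
  obtain ⟨e, rfl⟩ : ∃ e, d = e + 1 := ⟨d - 1, by omega⟩
  rw [Nat.add_sub_cancel, show (e + 1) * n + (e + 1) - 1 = (e + 1) * n + e by omega,
    show e * (n + 1) + 1 = e * n + 1 + e by ring]
  have hA := a_mul_factorial_mul_factorial e n
  have hB := a_mul_factorial_mul_factorial e (n + 1)
  rw [show e * (n + 1) + 1 = e * n + 1 + e by ring] at hB
  have hfact : ((e + 1) * (n + 1))! = ((e + 1) * n + e + 1) * ((e + 1) * n + e)! := by
    rw [show (e + 1) * (n + 1) = (e + 1) * n + e + 1 by ring, factorial_succ]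
  apply Nat.eq_of_mul_eq_mul_right
    (show 0 < e ! * (e * n + 1)! * ((n + 1)! * (e * n + 1 + e)!) by positivity)
  calc _ = ((e * n + 1 + e).choose e * (e * n + 1)! * e !) *
        (a (n + 1) (e + 1) * ((n + 1)! * (e * n + 1 + e)!)) := by ring
    _ = (e * n + 1 + e)! * (((e + 1) * n + e + 1) * ((e + 1) * n + e)!) := by
        rw [add_choose_mul_factorial_mul_factorial, hB, hfact]
    _ = (e * n + 1 + e)! * ((e + 1) * (n + 1) *
          (((e + 1) * n + e).choose e * (a n (e + 1) * (n ! * (e * n + 1)!)) * e !)) := by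
        rw [hA, add_choose_mul_factorial_mul_factorial]; ring
    _ = (e + 1) * ((e + 1) * n + e).choose e * a n (e + 1) *
          (e ! * (e * n + 1)! * ((n + 1)! * (e * n + 1 + e)!)) := by
        rw [factorial_succ n]; ring
end

section
/- For any m ≥ 1 and any Łukasiewicz walk s of length m, if a(s) denotes the first time s attains its minimum over {0,...,m}, then Rot_{a(s)}(s) is an excursion. -/
/-- A Łukasiewicz walk of length `m`: starts at 0, ends at `-1`, increments `≥ -1`. -/
def IsLuka (m : ℕ) (s : ℕ → ℤ) : Prop :=
  s 0 = 0 ∧ s m = -1 ∧ ∀ j < m, -1 ≤ s (j + 1) - s j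

/-- An excursion: a Łukasiewicz walk which is nonnegative at times `0, ..., m-1`. -/
def IsExcursion (m : ℕ) (s : ℕ → ℤ) : Prop :=
  IsLuka m s ∧ ∀ j < m, 0 ≤ s j

/-- The `r`-th rotation of the walk `s` of length `m`: the walk starting at `0` whose
`i`-th increment is the `((i + r) % m)`-th increment of `s`. -/
def rot (m r : ℕ) (s : ℕ → ℤ) : ℕ → ℤ :=
  fun j => ∑ i ∈ Finset.range j, (s ((i + r) % m + 1) - s ((i + r) % m))

/-- `k` is the first time at which `s` attains its minimum over `{0, ..., m}`. -/
def IsFirstArgmin (m : ℕ) (s : ℕ → ℤ) (k : ℕ) : Prop :=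
  k ≤ m ∧ (∀ j ≤ m, s k ≤ s j) ∧ ∀ j < k, s k < s j

/-!
Rotating by `r` glues the segment of `s` after time `r` (shifted down by `s r`) in front of the
segment before time `r` (shifted down by `s r + 1`, since the walk drops from `0` to `-1` over
a full period). When `r` is the first time the minimum is attained, the first piece stays
`≥ 0` because `s r` is the minimum, and the second because `s r` is strictly below every
earlier value.
-/

section Rotation

variable {m r : ℕ} {s : ℕ → ℤ}

@[simp]
lemma rot_zero (m r : ℕ) (s : ℕ → ℤ) : rot m r s 0 = 0 := by
  simp [rot]

lemma rot_succ_sub (m r : ℕ) (s : ℕ → ℤ) (j : ℕ) :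
    rot m r s (j + 1) - rot m r s j = s ((j + r) % m + 1) - s ((j + r) % m) := by
  simp only [rot, Finset.sum_range_succ]
  ring

lemma rot_eq_ite (h0 : s 0 = 0) (hend : s m = -1) (hr : r ≤ m) {j : ℕ} (hj : j ≤ m) :
    rot m r s j = if j + r ≤ m then s (j + r) - s r else s (j + r - m) - s r - 1 := by
  induction j with
  | zero => simp [hr]
  | succ j ih =>
    have step := rot_succ_sub m r s j
    rw [ih (by omega)] at step
    rcases lt_trichotomy (j + r) m with hlt | heq | hgt
    · rw [Nat.mod_eq_of_lt hlt, if_pos hlt.le] at step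
      rw [if_pos (by omega), show j + 1 + r = j + r + 1 by omega]
      linarith
    · rw [heq, Nat.mod_self, if_pos le_rfl, hend, h0] at step
      rw [if_neg (by omega), show j + 1 + r - m = 1 by omega]
      linarith
    · rw [Nat.mod_eq_sub_mod hgt.le, Nat.mod_eq_of_lt (by omega), if_neg (by omega)] at step
      rw [if_neg (by omega), show j + 1 + r - m = j + r - m + 1 by omega]
      linarith

theorem IsLuka.isLuka_rot (hs : IsLuka m s) (hr : r ≤ m) : IsLuka m (rot m r s) := by
  obtain ⟨h0, hend, hinc⟩ := hs
  refine ⟨rot_zero m r s, ?_, fun j hj => ?_⟩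
  · rw [rot_eq_ite h0 hend hr le_rfl]
    rcases Nat.eq_zero_or_pos r with rfl | hpos
    · simp [hend, h0]
    · rw [if_neg (by omega), Nat.add_sub_cancel_left]
      ring
  · rw [rot_succ_sub]
    exact hinc _ (Nat.mod_lt _ (by omega))

theorem IsLuka.rot_nonneg_of_isFirstArgmin (hs : IsLuka m s) (hr : IsFirstArgmin m s r)
    {j : ℕ} (hj : j < m) : 0 ≤ rot m r s j := by
  obtain ⟨hrm, hmin, hfirst⟩ := hr
  rw [rot_eq_ite hs.1 hs.2.1 hrm hj.le]
  split_ifs with hle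
  · linarith [hmin (j + r) hle]
  · linarith [hfirst (j + r - m) (by omega)]

end Rotation

theorem statement6_general (m : ℕ) (s : ℕ → ℤ) (hs : IsLuka m s)
    (k : ℕ) (hk : IsFirstArgmin m s k) : IsExcursion m (rot m k s) :=
  ⟨hs.isLuka_rot hk.1, fun _ hj => hs.rot_nonneg_of_isFirstArgmin hk hj⟩

/-- If `k` is the first time a Łukasiewicz walk `s` of length `m ≥ 1` attains its minimum
over `{0, ..., m}`, then the `k`-th rotation of `s` is an excursion. -/
theorem statement6 (m : ℕ) (hm : 1 ≤ m) (s : ℕ → ℤ) (hs : IsLuka m s)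
    (k : ℕ) (hk : IsFirstArgmin m s k) : IsExcursion m (rot m k s) :=
  statement6_general m s hs k hk
end

section
/- For m ≥ 1, the number of Łukasiewicz walks of length m equals m times the number of excursions of length m, provided increments are restricted to a fixed finite set S ⊆ {-1,0,1,2,...}: |Seq_m^S| = m · |Excursions_m^S|, where Seq_m^S are walks with increments in S from 0 to -1 in m steps, and Excursions_m^S those additionally nonnegative before time m. -/
/-!
Cycle lemma. Extend the increments `m`-periodically; the resulting walk drops by `1` over every
period. Rotating by `k` yields an excursion iff the walk never goes below its value at time `k`
during the next period. The first time the minimum over a period is attained is such a `k`, and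
there is only one: if `k < l` both worked, then `walk k ≤ walk l ≤ walk (k + m) = walk k - 1`.
Hence `(k, g) ↦ g` rotated back by `k` is a bijection from `Fin m × Excursions` onto all walks.
-/

namespace CycleLemma

open Finset Fin.NatCast

section Rotation

variable {m : ℕ} [NeZero m]

def rotate (k : Fin m) (f : Fin m → ℤ) : Fin m → ℤ := fun i => f (i + k)

lemma rotate_neg_rotate (k : Fin m) (f : Fin m → ℤ) : rotate (-k) (rotate k f) = f := by
  funext i
  simp [rotate]

lemma rotate_rotate_neg (k : Fin m) (f : Fin m → ℤ) : rotate k (rotate (-k) f) = f := by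
  funext i
  simp [rotate]

lemma sum_rotate (k : Fin m) (f : Fin m → ℤ) : ∑ i, rotate k f i = ∑ i, f i :=
  Fintype.sum_equiv (Equiv.addRight k) _ _ fun _ => rfl

/-- The partial sums of the periodic extension of `f` (indices are read modulo `m`). -/
def walk (f : Fin m → ℤ) (n : ℕ) : ℤ := ∑ i ∈ range n, f (i : Fin m)

lemma walk_succ (f : Fin m → ℤ) (n : ℕ) : walk f (n + 1) = walk f n + f n :=
  sum_range_succ _ _

lemma walk_add_length (f : Fin m → ℤ) (n : ℕ) : walk f (n + m) = walk f n + ∑ i, f i := by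
  induction n with
  | zero => simp [walk, ← Fin.sum_univ_eq_sum_range (fun i => f (i : Fin m))]
  | succ n ih =>
    rw [Nat.add_right_comm, walk_succ, ih, walk_succ, Nat.cast_add, Fin.natCast_self, add_zero]
    ring

lemma walk_rotate (k : Fin m) (f : Fin m → ℤ) (n : ℕ) :
    walk (rotate k f) n = walk f (k + n) - walk f k := by
  induction n with
  | zero => simp [walk]
  | succ n ih =>
    rw [walk_succ, ih, ← add_assoc, walk_succ, rotate, Nat.cast_add, Fin.cast_val_eq_self,
      add_comm (n : Fin m)]
    ring

lemma sum_filter_val_lt_eq_walk (f : Fin m → ℤ) {j : ℕ} (hj : j ≤ m) :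
    ∑ i ∈ univ.filter (fun i : Fin m => i.1 < j), f i = walk f j := by
  have val_cast {n : ℕ} (hn : n < j) : ((n : Fin m) : ℕ) = n :=
    Fin.val_cast_of_lt (hn.trans_le hj)
  refine sum_nbij' (fun i => i.1) (fun n => (n : Fin m)) ?_ ?_ ?_ ?_ ?_ <;>
    simp +contextual [val_cast]

end Rotation

def IsExcursion {m : ℕ} (f : Fin m → ℤ) : Prop :=
  ∀ j < m, 0 ≤ ∑ i ∈ univ.filter (fun i : Fin m => i.1 < j), f i

section Excursion

variable {m : ℕ} [NeZero m]

lemma isExcursion_rotate_iff (k : Fin m) (f : Fin m → ℤ) :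
    IsExcursion (rotate k f) ↔ ∀ j < m, walk f k ≤ walk f (k + j) := by
  refine forall₂_congr fun j hj => ?_
  rw [sum_filter_val_lt_eq_walk _ hj.le, walk_rotate, sub_nonneg]

variable {f : Fin m → ℤ}

lemma eq_of_isExcursion_rotate (hf : ∑ i, f i = -1) {k l : Fin m}
    (hk : IsExcursion (rotate k f)) (hl : IsExcursion (rotate l f)) : k = l := by
  wlog hkl : k < l generalizing k l
  · rcases (not_lt.1 hkl).lt_or_eq with h | h
    exacts [(this hl hk h).symm, h.symm]
  rw [isExcursion_rotate_iff] at hk hl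
  have h1 := hk (l - k) (by omega)
  have h2 := hl (k + m - l) (by omega)
  rw [Nat.add_sub_cancel' hkl.le] at h1
  rw [show l.1 + (k + m - l) = k + m by omega, walk_add_length, hf] at h2
  omega

lemma exists_isExcursion_rotate (hf : ∑ i, f i = -1) :
    ∃ k : Fin m, IsExcursion (rotate k f) := by
  classical
  have hmin : ∃ k, k < m ∧ ∀ l < m, walk f k ≤ walk f l := by
    obtain ⟨k, hk, hmin⟩ :=
      exists_min_image (range m) (walk f) (nonempty_range_iff.2 (NeZero.ne m))
    exact ⟨k, mem_range.1 hk, fun l hl => hmin l (mem_range.2 hl)⟩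
  obtain ⟨k, ⟨hkm, hk⟩, hfirst⟩ : ∃ k, (k < m ∧ ∀ l < m, walk f k ≤ walk f l) ∧
      ∀ l < k, ¬(l < m ∧ ∀ l' < m, walk f l ≤ walk f l') :=
    ⟨Nat.find hmin, Nat.find_spec hmin, fun _ => Nat.find_min hmin⟩
  -- `k` is the first minimum over one period; beyond the period the walk has dropped by `1`,
  -- so it stays above `walk f k` because every earlier value is strictly larger.
  refine ⟨⟨k, hkm⟩, (isExcursion_rotate_iff _ _).2 fun j hj => ?_⟩
  dsimp only
  rcases lt_or_ge (k + j) m with h | h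
  · exact hk _ h
  · obtain ⟨l, hl, hlt⟩ : ∃ l < m, walk f l < walk f (k + j - m) := by
      have := hfirst (k + j - m) (by omega)
      push Not at this
      exact this (by omega)
    have := walk_add_length f (k + j - m)
    rw [Nat.sub_add_cancel h, hf] at this
    have := hk l hl
    omega

variable (S : Set ℤ)

noncomputable def rotationEquiv :
    {f : Fin m → ℤ // (∀ i, f i ∈ S) ∧ ∑ i, f i = -1} ≃
      Fin m × {f : Fin m → ℤ // (∀ i, f i ∈ S) ∧ ∑ i, f i = -1 ∧ IsExcursion f} where
  toFun f :=
    let k := (exists_isExcursion_rotate f.2.2).choose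
    ⟨k, rotate k f, fun _ => f.2.1 _, (sum_rotate k f).trans f.2.2,
      (exists_isExcursion_rotate f.2.2).choose_spec⟩
  invFun g := ⟨rotate (-g.1) g.2, fun _ => g.2.2.1 _, (sum_rotate _ _).trans g.2.2.2.1⟩
  left_inv f := Subtype.ext (rotate_neg_rotate _ _)
  right_inv := by
    rintro ⟨k, g, hgS, hg, hgexc⟩
    have hsum : ∑ i, rotate (-k) g i = -1 := (sum_rotate _ _).trans hg
    have hk : (exists_isExcursion_rotate hsum).choose = k :=
      eq_of_isExcursion_rotate hsum (exists_isExcursion_rotate hsum).choose_spec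
        (by rwa [rotate_rotate_neg])
    exact Prod.ext hk (Subtype.ext (by dsimp only; rw [hk, rotate_rotate_neg]))

end Excursion

theorem card_eq_mul_card_isExcursion (m : ℕ) (S : Set ℤ) :
    Nat.card {f : Fin m → ℤ // (∀ i, f i ∈ S) ∧ ∑ i, f i = -1} =
      m * Nat.card {f : Fin m → ℤ // (∀ i, f i ∈ S) ∧ ∑ i, f i = -1 ∧ IsExcursion f} := by
  rcases m with _ | n
  · simp
  · rw [Nat.card_congr (rotationEquiv S), Nat.card_prod, Nat.card_fin]

end CycleLemma

theorem statement18_general (m : ℕ) (S : Finset ℤ) :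
    Nat.card {f : Fin m → ℤ // (∀ i, f i ∈ S) ∧ (∑ i, f i) = -1} =
      m * Nat.card {f : Fin m → ℤ // (∀ i, f i ∈ S) ∧ (∑ i, f i) = -1 ∧
        ∀ j < m, 0 ≤ ∑ i ∈ Finset.univ.filter (fun i : Fin m => i.1 < j), f i} :=
  CycleLemma.card_eq_mul_card_isExcursion m S

/-- For a fixed finite set `S` of increments with `min S ≥ -1` and `-1 ∈ S`, the number of
Łukasiewicz-type walks of length `m` from `0` to `-1` with increments in `S` equals `m`
times the number of such walks that are nonnegative before time `m` (excursions). Walks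
are encoded by their increment sequences `f : Fin m → ℤ`. -/
theorem statement18 (m : ℕ) (hm : 1 ≤ m) (S : Finset ℤ)
    (hS : ∀ x ∈ S, -1 ≤ x) (hS1 : (-1 : ℤ) ∈ S) :
    Nat.card {f : Fin m → ℤ // (∀ i, f i ∈ S) ∧ (∑ i, f i) = -1} =
      m * Nat.card {f : Fin m → ℤ // (∀ i, f i ∈ S) ∧ (∑ i, f i) = -1 ∧
        ∀ j < m, 0 ≤ ∑ i ∈ Finset.univ.filter (fun i : Fin m => i.1 < j), f i} :=
  statement18_general m S
end
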